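/- arXiv:2108.08555 — 8 statements merged into one kernel-verified Lean document; each statement's English description precedes it below -/
import Mathlib

section
/- Let X be a Hilbert space, C ⊆ X, and T : C → C nonexpansive satisfying Wittmann's condition: T0 = 0 ∈ C and ‖Tx + Ty‖ ≤ ‖x + y‖ for all x, y ∈ C. Then for all x ∈ C and m, k, i ∈ ℕ: (α^i_m)² − (α^i_{m+k})² ≤ 4·(‖T^m x‖² − ‖T^{m+k+i} x‖²), where α^i_n := ‖T^n x − T^{n+i} x‖. -/
theorem stmt_2 {X : Type*} [NormedAddCommGroup X] [InnerProductSpace ℝ X]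
    (C : Set X) (h0 : (0 : X) ∈ C)
    (T : X → X) (hTC : Set.MapsTo T C C)
    (hT : ∀ x ∈ C, ∀ y ∈ C, ‖T x - T y‖ ≤ ‖x - y‖)
    (hT0 : T 0 = 0)
    (hW : ∀ x ∈ C, ∀ y ∈ C, ‖T x + T y‖ ≤ ‖x + y‖)
    (x : X) (hx : x ∈ C) (m k i : ℕ) :
    ‖T^[m] x - T^[m + i] x‖ ^ 2 - ‖T^[m + k] x - T^[m + k + i] x‖ ^ 2
      ≤ 4 * (‖T^[m] x‖ ^ 2 - ‖T^[m + k + i] x‖ ^ 2) := by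
  have hmem : ∀ n, T^[n] x ∈ C := fun n => (hTC.iterate n) hx
  -- norms are nonincreasing
  have hnorm1 : ∀ n, ‖T^[n+1] x‖ ≤ ‖T^[n] x‖ := by
    intro n
    rw [Function.iterate_succ_apply']
    have := hT _ (hmem n) 0 h0
    simpa [hT0] using this
  have hnorm : ∀ n j, ‖T^[n+j] x‖ ≤ ‖T^[n] x‖ := by
    intro n j
    induction j with
    | zero => simp
    | succ j ih => exact le_trans (hnorm1 (n+j)) ih
  -- differences nonincreasing
  have hdiff : ∀ j, ‖T^[m+j] x - T^[m+j+i] x‖ ≤ ‖T^[m] x - T^[m+i] x‖ := by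
    intro j
    induction j with
    | zero => simp
    | succ j ih =>
      refine le_trans ?_ ih
      have : m + (j+1) + i = (m + j + i) + 1 := by ring
      rw [this, show m + (j+1) = (m+j)+1 from rfl,
        Function.iterate_succ_apply', Function.iterate_succ_apply']
      exact hT _ (hmem _) _ (hmem _)
  -- sums nonincreasing
  have hsum : ∀ j, ‖T^[m+j] x + T^[m+j+i] x‖ ≤ ‖T^[m] x + T^[m+i] x‖ := by
    intro j
    induction j with
    | zero => simp
    | succ j ih =>
      refine le_trans ?_ ih
      have : m + (j+1) + i = (m + j + i) + 1 := by ring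
      rw [this, show m + (j+1) = (m+j)+1 from rfl,
        Function.iterate_succ_apply', Function.iterate_succ_apply']
      exact hW _ (hmem _) _ (hmem _)
  set A := ‖T^[m] x‖ with hA
  set B := ‖T^[m+i] x‖ with hB
  set Cc := ‖T^[m+k] x‖ with hCc
  set D := ‖T^[m+k+i] x‖ with hD
  have hBA : B ≤ A := hnorm m i
  have hDC : D ≤ Cc := by
    have := hnorm (m+k) i
    simpa using this
  have hCA : Cc ≤ A := hnorm m k
  have hS : ‖T^[m+k] x + T^[m+k+i] x‖ ≤ ‖T^[m] x + T^[m+i] x‖ := hsum k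
  have hpar1 := parallelogram_law_with_norm ℝ (T^[m] x) (T^[m+i] x)
  have hpar2 := parallelogram_law_with_norm ℝ (T^[m+k] x) (T^[m+k+i] x)
  have h1 : (0:ℝ) ≤ ‖T^[m+k] x + T^[m+k+i] x‖ := norm_nonneg _
  have h2 : (0:ℝ) ≤ D := norm_nonneg _
  have h3 : (0:ℝ) ≤ B := norm_nonneg _
  nlinarith [sq_nonneg (A - B), sq_nonneg (Cc - D), mul_self_nonneg A,
    mul_self_nonneg Cc, sq_nonneg (‖T^[m] x + T^[m+i] x‖),
    mul_le_mul hS hS h1 (norm_nonneg _), mul_le_mul hBA hBA h3 (le_trans h3 hBA),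
    mul_le_mul hDC hDC h2 (le_trans h2 hDC)]
end

section
/- Let X be a Hilbert space, C ⊆ X with 0 ∈ C, and T : C → C nonexpansive with T0 = 0 and ‖Tx + Ty‖ ≤ ‖x + y‖ for all x, y ∈ C. Then for all x ∈ C and m, k, i ∈ ℕ: ⟨T^{m+k} x, T^{m+k+i} x⟩ − ⟨T^m x, T^{m+i} x⟩ ≤ ‖T^m x‖² − ‖T^{m+k+i} x‖². -/
open scoped RealInnerProductSpace

theorem stmt_3 {X : Type*} [NormedAddCommGroup X] [InnerProductSpace ℝ X]
    (C : Set X) (h0 : (0 : X) ∈ C)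
    (T : X → X) (hTC : Set.MapsTo T C C)
    (hT : ∀ x ∈ C, ∀ y ∈ C, ‖T x - T y‖ ≤ ‖x - y‖)
    (hT0 : T 0 = 0)
    (hW : ∀ x ∈ C, ∀ y ∈ C, ‖T x + T y‖ ≤ ‖x + y‖)
    (x : X) (hx : x ∈ C) (m k i : ℕ) :
    ⟪T^[m + k] x, T^[m + k + i] x⟫ - ⟪T^[m] x, T^[m + i] x⟫
      ≤ ‖T^[m] x‖ ^ 2 - ‖T^[m + k + i] x‖ ^ 2 := by
  have memC : ∀ (n : ℕ) (z : X), z ∈ C → T^[n] z ∈ C := fun n z hz => (hTC.iterate n) hz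
  -- norm of iterates is nonincreasing
  have hnorm1 : ∀ z ∈ C, ‖T z‖ ≤ ‖z‖ := by
    intro z hz
    have := hT z hz 0 h0
    simpa [hT0] using this
  have hnormn : ∀ (n : ℕ), ∀ z ∈ C, ‖T^[n] z‖ ≤ ‖z‖ := by
    intro n
    induction n with
    | zero => intro z hz; simp
    | succ n ih =>
      intro z hz
      rw [Function.iterate_succ_apply']
      exact le_trans (hnorm1 _ (memC n z hz)) (ih z hz)
  -- Wittmann's condition iterated
  have hWn : ∀ (n : ℕ), ∀ u ∈ C, ∀ v ∈ C, ‖T^[n] u + T^[n] v‖ ≤ ‖u + v‖ := by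
    intro n
    induction n with
    | zero => intro u hu v hv; simp
    | succ n ih =>
      intro u hu v hv
      rw [Function.iterate_succ_apply', Function.iterate_succ_apply']
      exact le_trans (hW _ (memC n u hu) _ (memC n v hv)) (ih u hu v hv)
  set u := T^[m] x with hu
  set v := T^[m + i] x with hv
  have huC : u ∈ C := memC m x hx
  have hvC : v ∈ C := memC (m + i) x hx
  have e1 : T^[m + k] x = T^[k] u := by
    rw [hu, ← Function.iterate_add_apply, add_comm]
  have e2 : T^[m + k + i] x = T^[k] v := by
    rw [hv, ← Function.iterate_add_apply]
    congr 1
    omega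
  rw [e1, e2]
  -- key: ‖v‖ ≤ ‖u‖ and ‖T^[k] v‖ ≤ ‖T^[k] u‖
  have hvu : ‖v‖ ≤ ‖u‖ := by
    rw [hv, hu, add_comm, Function.iterate_add_apply]
    exact hnormn i _ (memC m x hx)
  have hkvu : ‖T^[k] v‖ ≤ ‖T^[k] u‖ := by
    have hnum : k + (m + i) = i + (k + m) := by omega
    have : T^[k] v = T^[i] (T^[k] u) := by
      rw [hv, hu, ← Function.iterate_add_apply, ← Function.iterate_add_apply,
        ← Function.iterate_add_apply, hnum, add_assoc]
    rw [this]
    exact hnormn i _ (memC k u huC)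
  have hW1 : ‖T^[k] u + T^[k] v‖ ≤ ‖u + v‖ := hWn k u huC v hvC
  have hW2 : ‖T^[k] u + T^[k] v‖ ^ 2 ≤ ‖u + v‖ ^ 2 := by
    exact pow_le_pow_left₀ (norm_nonneg _) hW1 2
  rw [norm_add_sq_real, norm_add_sq_real] at hW2
  nlinarith [norm_nonneg (T^[k] v), norm_nonneg v, norm_nonneg u, norm_nonneg (T^[k] u)]
end

section
/- Let T : C → C be nonexpansive on a subset C of a normed space and x ∈ C. Given ε > 0 and g : ℕ → ℕ, suppose M, N ∈ ℕ satisfy M ≥ N + g(N) and ‖T^M x − T^N x‖ < ε/2. Then |α^i_m − α^i_n| < ε for all m, n ∈ [N, N + g(N)] and all i ∈ ℕ, where α^i_n := ‖T^n x − T^{n+i} x‖. -/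
theorem stmt_4 {X : Type*} [NormedAddCommGroup X]
    (C : Set X) (T : X → X) (hTC : Set.MapsTo T C C)
    (hT : ∀ x ∈ C, ∀ y ∈ C, ‖T x - T y‖ ≤ ‖x - y‖)
    (x : X) (hx : x ∈ C)
    (ε : ℝ) (hε : 0 < ε) (g : ℕ → ℕ) (M N : ℕ)
    (hM : N + g N ≤ M) (hMN : ‖T^[M] x - T^[N] x‖ < ε / 2) :
    ∀ m n : ℕ, N ≤ m → m ≤ N + g N → N ≤ n → n ≤ N + g N → ∀ i : ℕ,
      |‖T^[m] x - T^[m + i] x‖ - ‖T^[n] x - T^[n + i] x‖| < ε := by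
  have hmem : ∀ k : ℕ, T^[k] x ∈ C := by
    intro k
    induction k with
    | zero => exact hx
    | succ k ih => rw [Function.iterate_succ_apply']; exact hTC ih
  -- nonexpansiveness of iterates
  have hiter : ∀ (j : ℕ) (a b : ℕ), ‖T^[a + j] x - T^[b + j] x‖ ≤ ‖T^[a] x - T^[b] x‖ := by
    intro j
    induction j with
    | zero => intro a b; simp
    | succ j ih =>
      intro a b
      have : ‖T^[a + j + 1] x - T^[b + j + 1] x‖ ≤ ‖T^[a + j] x - T^[b + j] x‖ := by
        rw [Function.iterate_succ_apply', Function.iterate_succ_apply']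
        exact hT _ (hmem _) _ (hmem _)
      calc ‖T^[a + (j + 1)] x - T^[b + (j + 1)] x‖
          = ‖T^[a + j + 1] x - T^[b + j + 1] x‖ := by ring_nf
        _ ≤ ‖T^[a + j] x - T^[b + j] x‖ := this
        _ ≤ ‖T^[a] x - T^[b] x‖ := ih a b
  -- α monotone decreasing in n
  have hmono : ∀ (i a b : ℕ), a ≤ b →
      ‖T^[b] x - T^[b + i] x‖ ≤ ‖T^[a] x - T^[a + i] x‖ := by
    intro i a b hab
    obtain ⟨j, rfl⟩ := Nat.exists_eq_add_of_le hab
    have := hiter j a (a + i)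
    calc ‖T^[a + j] x - T^[a + j + i] x‖
        = ‖T^[a + j] x - T^[a + i + j] x‖ := by ring_nf
      _ ≤ ‖T^[a] x - T^[a + i] x‖ := this
  intro m n hNm hmg hNn hng i
  have hmM : m ≤ M := le_trans hmg hM
  have hnM : n ≤ M := le_trans hng hM
  -- sandwich: α_M ≤ α_m, α_n ≤ α_N
  have h1 := hmono i N m hNm
  have h2 := hmono i m M hmM
  have h3 := hmono i N n hNn
  have h4 := hmono i n M hnM
  -- α_N - α_M < ε
  have hNMi : ‖T^[N + i] x - T^[M + i] x‖ ≤ ‖T^[N] x - T^[M] x‖ := hiter i N M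
  have hNM : ‖T^[N] x - T^[M] x‖ < ε / 2 := by rwa [norm_sub_rev] at hMN
  have hgap : ‖T^[N] x - T^[N + i] x‖ - ‖T^[M] x - T^[M + i] x‖ < ε := by
    have : ‖T^[N] x - T^[N + i] x‖ ≤
        ‖T^[N] x - T^[M] x‖ + ‖T^[M] x - T^[M + i] x‖ + ‖T^[M + i] x - T^[N + i] x‖ := by
      have := norm_sub_le_norm_sub_add_norm_sub (T^[N] x) (T^[M] x) (T^[N + i] x)
      have h2' := norm_sub_le_norm_sub_add_norm_sub (T^[M] x) (T^[M + i] x) (T^[N + i] x)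
      linarith
    have hMi : ‖T^[M + i] x - T^[N + i] x‖ ≤ ‖T^[N] x - T^[M] x‖ := by
      rwa [norm_sub_rev] at hNMi
    linarith
  rw [abs_sub_lt_iff]
  constructor <;> linarith
end

section
/- Let (a_n) be a non-increasing sequence of reals with 0 ≤ a_n ≤ b for all n. For any ε > 0 and g : ℕ → ℕ, there exists N ≤ g̃^⌈b/ε⌉(0) (where g̃(n) := n + g(n) and g̃^i denotes the i-th iterate starting at 0) such that |a_m − a_n| < ε for all m, n ∈ [N, N + g(N)]. -/
theorem stmt_5 (a : ℕ → ℝ) (b : ℝ)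
    (hmono : ∀ n : ℕ, a (n + 1) ≤ a n)
    (h0 : ∀ n : ℕ, 0 ≤ a n) (hb : ∀ n : ℕ, a n ≤ b)
    (ε : ℝ) (hε : 0 < ε) (g : ℕ → ℕ) :
    ∃ N ≤ (fun n => n + g n)^[⌈b / ε⌉₊] 0,
      ∀ m n : ℕ, N ≤ m → m ≤ N + g N → N ≤ n → n ≤ N + g N → |a m - a n| < ε := by
  set k := ⌈b / ε⌉₊ with hk
  set F : ℕ → ℕ := fun i => (fun n => n + g n)^[i] 0 with hF
  have hFsucc : ∀ i, F (i + 1) = F i + g (F i) := by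
    intro i
    simp only [hF, Function.iterate_succ_apply']
  have hanti : Antitone a := antitone_nat_of_succ_le hmono
  have hFmono : Monotone F := by
    apply monotone_nat_of_le_succ
    intro i
    rw [hFsucc]
    exact Nat.le_add_right _ _
  by_contra hcon
  push_neg at hcon
  have key : ∀ i ≤ k, a (F (i + 1)) ≤ a (F i) - ε := by
    intro i hi
    obtain ⟨m, n, hm1, hm2, hn1, hn2, hmn⟩ := hcon (F i) (hFmono hi)
    have h1 : a m ≤ a (F i) := hanti hm1
    have h2 : a n ≤ a (F i) := hanti hn1
    have h3 : a (F (i + 1)) ≤ a m := by rw [hFsucc]; exact hanti hm2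
    have h4 : a (F (i + 1)) ≤ a n := by rw [hFsucc]; exact hanti hn2
    rcases abs_cases (a m - a n) with ⟨he, _⟩ | ⟨he, _⟩ <;> rw [he] at hmn <;> linarith
  have main : ∀ j ≤ k + 1, a (F j) ≤ a 0 - j * ε := by
    intro j hj
    induction j with
    | zero => simp [hF]
    | succ j ih =>
      have h1 := ih (Nat.le_of_succ_le hj)
      have h2 := key j (Nat.lt_succ_iff.mp hj)
      push_cast
      linarith
  have hkε : b ≤ (k : ℝ) * ε := by
    have := Nat.le_ceil (b / ε)
    rw [div_le_iff₀ hε] at this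
    exact this
  have := main (k + 1) le_rfl
  have h0' := h0 (F (k + 1))
  have hab := hb 0
  push_cast at this
  linarith
end

section
/- Let X be a uniformly convex normed space with modulus η satisfying (0 < s < t ⟹ 0 = η(0) < η(s) < η(t) and η(s)/s ≤ η(t)/t), let C ⊆ X be convex with ‖z‖ ≤ b/2 for all z ∈ C, and let T : C → C be nonexpansive. Define γ₂(t) := min{t, (b/2)·η(4t/b)}. Then γ₂ is strictly increasing, unbounded, continuous, γ₂(0) = 0, and for all x₁, x₂ ∈ C and λ ∈ [0,1]: γ₂(‖T(λx₁ + (1−λ)x₂) − (λTx₁ + (1−λ)Tx₂)‖) ≤ ‖x₁ − x₂‖ − ‖Tx₁ − Tx₂‖. -/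
set_option maxHeartbeats 1000000

theorem key_half {X : Type*} [NormedAddCommGroup X] [NormedSpace ℝ X]
    (η : ℝ → ℝ)
    (hη0 : η 0 = 0)
    (hηmono : ∀ s t : ℝ, 0 < s → s < t → 0 < η s ∧ η s < η t)
    (hηconv : ∀ s t : ℝ, 0 < s → s < t → η s / s ≤ η t / t)
    (hmod : ∀ ε : ℝ, 0 < ε → ∀ x y : X, ‖x‖ ≤ 1 → ‖y‖ ≤ 1 → ε ≤ ‖x - y‖ →
      ‖(2 : ℝ)⁻¹ • (x + y)‖ ≤ 1 - η ε)
    (C : Set X) (hCconv : Convex ℝ C)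
    (b : ℝ) (hb : 0 < b) (hC : ∀ z ∈ C, ‖z‖ ≤ b / 2)
    (T : X → X) (hTC : Set.MapsTo T C C)
    (hT : ∀ x ∈ C, ∀ y ∈ C, ‖T x - T y‖ ≤ ‖x - y‖)
    (γ₂ : ℝ → ℝ) (hγ₂ : ∀ t : ℝ, γ₂ t = min t (b / 2 * η (4 * t / b)))
    (x₁ : X) (hx₁ : x₁ ∈ C) (x₂ : X) (hx₂ : x₂ ∈ C)
    (l : ℝ) (hl0 : 0 ≤ l) (hl2 : l ≤ 1/2) :
    γ₂ ‖T (l • x₁ + (1 - l) • x₂) - (l • T x₁ + (1 - l) • T x₂)‖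
        ≤ ‖x₁ - x₂‖ - ‖T x₁ - T x₂‖ := by
  have hl1 : l ≤ 1 := by linarith
  set z : X := l • x₁ + (1 - l) • x₂ with hz_def
  have hz : z ∈ C := hCconv hx₁ hx₂ hl0 (by linarith) (by ring)
  have hTz : T z ∈ C := hTC hz
  set d : ℝ := ‖x₁ - x₂‖ with hd_def
  set e : ℝ := ‖T x₁ - T x₂‖ with he_def
  set u : X := T z - (l • T x₁ + (1 - l) • T x₂) with hu_def
  set c : ℝ := ‖u‖ with hc_def
  have hd0 : 0 ≤ d := norm_nonneg _
  have hed : e ≤ d := hT x₁ hx₁ x₂ hx₂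
  have h1 : ‖T z - T x₁‖ ≤ (1 - l) * d := by
    have := hT z hz x₁ hx₁
    have h2 : z - x₁ = (1 - l) • (x₂ - x₁) := by rw [hz_def]; module
    rw [h2, norm_smul, Real.norm_eq_abs, abs_of_nonneg (by linarith), norm_sub_rev x₂ x₁] at this
    exact this
  have h2 : ‖T z - T x₂‖ ≤ l * d := by
    have := hT z hz x₂ hx₂
    have h3 : z - x₂ = l • (x₁ - x₂) := by rw [hz_def]; module
    rw [h3, norm_smul, Real.norm_eq_abs, abs_of_nonneg hl0] at this
    exact this
  have hu : u = l • (T z - T x₁) + (1 - l) • (T z - T x₂) := by rw [hu_def]; module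
  have hcle : c ≤ 2 * l * (1 - l) * d := by
    rw [hc_def, hu]
    calc ‖l • (T z - T x₁) + (1 - l) • (T z - T x₂)‖
        ≤ ‖l • (T z - T x₁)‖ + ‖(1 - l) • (T z - T x₂)‖ := norm_add_le _ _
      _ = l * ‖T z - T x₁‖ + (1 - l) * ‖T z - T x₂‖ := by
          rw [norm_smul, norm_smul, Real.norm_eq_abs, Real.norm_eq_abs,
            abs_of_nonneg hl0, abs_of_nonneg (by linarith)]
      _ ≤ l * ((1 - l) * d) + (1 - l) * (l * d) := by
          gcongr <;> linarith
      _ = 2 * l * (1 - l) * d := by ring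
  rcases (norm_nonneg u).eq_or_lt with hc0 | hc0
  · have hc0' : c = 0 := hc_def.trans hc0.symm
    rw [hγ₂, hc0']
    simp only [mul_zero, zero_div, hη0, mul_zero]
    norm_num
    linarith
  · rw [← hc_def] at hc0
    have hprod : 0 < 2 * l * (1 - l) * d := lt_of_lt_of_le hc0 hcle
    have hl : 0 < l := by
      rcases hl0.eq_or_lt with h | h
      · rw [← h] at hprod; simp at hprod
      · exact h
    have hd : 0 < d := by
      rcases hd0.eq_or_lt with h | h
      · rw [← h] at hprod; simp at hprod
      · exact h
    have hl' : 0 < 1 - l := by linarith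
    set L : ℝ := l * (1 - l) * d with hL_def
    have hL : 0 < L := by positivity
    set v : X := ((1 - l) * d)⁻¹ • (T x₁ - T z) with hv_def
    set w : X := (l * d)⁻¹ • (T z - T x₂) with hw_def
    have hv : ‖v‖ ≤ 1 := by
      rw [hv_def, norm_smul, Real.norm_eq_abs, abs_inv, abs_of_pos (by positivity)]
      rw [inv_mul_le_one₀ (by positivity)]
      rw [norm_sub_rev]; simpa using h1
    have hw : ‖w‖ ≤ 1 := by
      rw [hw_def, norm_smul, Real.norm_eq_abs, abs_inv, abs_of_pos (by positivity)]
      rw [inv_mul_le_one₀ (by positivity)]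
      simpa using h2
    set ε : ℝ := c / L with hε_def
    have hε : 0 < ε := by positivity
    have hvw : ‖v - w‖ = ε := by
      have hid : v - w = (-(L⁻¹)) • u := by
        rw [hv_def, hw_def, hu_def, hL_def]
        match_scalars <;> field_simp <;> ring
      rw [hid, norm_smul, Real.norm_eq_abs, abs_neg, abs_inv, abs_of_pos hL, ← hc_def,
        hε_def, inv_mul_eq_div]
    have hm := hmod ε hε v w hv hw hvw.ge
    have he : e ≤ d - 2 * l * d * η ε := by
      have hexpr : T x₁ - T x₂ = ((1 - 2*l) * d) • v + (2 * l * d) • ((2:ℝ)⁻¹ • (v + w)) := by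
        rw [hv_def, hw_def]
        match_scalars <;> field_simp <;> ring
      have : e ≤ (1 - 2*l) * d * ‖v‖ + 2 * l * d * ‖(2:ℝ)⁻¹ • (v + w)‖ := by
        rw [he_def, hexpr]
        calc ‖((1 - 2*l) * d) • v + (2 * l * d) • ((2:ℝ)⁻¹ • (v + w))‖
            ≤ ‖((1 - 2*l) * d) • v‖ + ‖(2 * l * d) • ((2:ℝ)⁻¹ • (v + w))‖ := norm_add_le _ _
          _ = (1 - 2*l) * d * ‖v‖ + 2 * l * d * ‖(2:ℝ)⁻¹ • (v + w)‖ := by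
              rw [norm_smul ((1 - 2*l) * d) v, norm_smul (2 * l * d) ((2:ℝ)⁻¹ • (v + w)),
                Real.norm_eq_abs, Real.norm_eq_abs,
                abs_of_nonneg (mul_nonneg (by linarith) hd0),
                abs_of_nonneg (mul_nonneg (mul_nonneg (by norm_num) hl0) hd0)]
      have h4 : (1 - 2*l) * d * ‖v‖ ≤ (1 - 2*l) * d := by
        nlinarith [mul_nonneg (mul_nonneg (by linarith : (0:ℝ) ≤ 1 - 2*l) hd0)
          (by linarith [hv] : (0:ℝ) ≤ 1 - ‖v‖)]
      have h5 : 2 * l * d * ‖(2:ℝ)⁻¹ • (v + w)‖ ≤ 2 * l * d * (1 - η ε) := by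
        apply mul_le_mul_of_nonneg_left hm (by positivity)
      nlinarith
    -- key ratio inequality
    have hηε : 0 < η ε := (hηmono ε (ε + 1) hε (by linarith)).1
    have hdb : d ≤ b := by
      have e1 := hC x₁ hx₁; have e2 := hC x₂ hx₂
      calc d ≤ ‖x₁‖ + ‖x₂‖ := norm_sub_le _ _
        _ ≤ b := by linarith
    have hs : 0 < 4 * c / b := by positivity
    have hst : 4 * c / b ≤ ε := by
      rw [hε_def, div_le_div_iff₀ hb hL, hL_def]
      nlinarith [mul_nonneg hc0.le (by linarith : (0:ℝ) ≤ b - d),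
        mul_nonneg hc0.le (mul_nonneg hd0 (sq_nonneg (1 - 2*l)))]
    have hratio : η (4 * c / b) * ε ≤ η ε * (4 * c / b) := by
      rcases eq_or_lt_of_le hst with heq | hlt
      · rw [heq]
      · have := hηconv (4 * c / b) ε hs hlt
        rw [div_le_div_iff₀ hs hε] at this
        linarith
    have hεL : ε * L = c := by rw [hε_def]; field_simp
    have h7 : η (4 * c / b) * c * b ≤ η ε * (4 * c) * L := by
      have h7a := mul_le_mul_of_nonneg_right hratio (le_of_lt (mul_pos hL hb))
      calc η (4 * c / b) * c * b = η (4 * c / b) * ε * (L * b) := by rw [← hεL]; ring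
        _ ≤ η ε * (4 * c / b) * (L * b) := h7a
        _ = η ε * (4 * c) * L * (b / b) := by ring
        _ = η ε * (4 * c) * L := by rw [div_self (ne_of_gt hb), mul_one]
    have h8 : η (4 * c / b) * c * b ≤ η ε * (4 * c) * (l * d) := by
      refine h7.trans ?_
      rw [hL_def]
      nlinarith [mul_nonneg (mul_nonneg hηε.le hc0.le)
        (mul_nonneg (mul_nonneg hl.le hl.le) hd.le)]
    have hkey : b / 2 * η (4 * c / b) ≤ 2 * l * d * η ε := by
      nlinarith [h8, hc0]
    rw [hγ₂]
    calc min c (b / 2 * η (4 * c / b)) ≤ b / 2 * η (4 * c / b) := min_le_right _ _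
      _ ≤ 2 * l * d * η ε := hkey
      _ ≤ d - e := by linarith
theorem stmt_11 {X : Type*} [NormedAddCommGroup X] [NormedSpace ℝ X]
    (η : ℝ → ℝ)
    (hη0 : η 0 = 0)
    (hηmono : ∀ s t : ℝ, 0 < s → s < t → 0 < η s ∧ η s < η t)
    (hηconv : ∀ s t : ℝ, 0 < s → s < t → η s / s ≤ η t / t)
    (hηcont : ContinuousOn η (Set.Ici 0))
    (hηunb : ∀ M : ℝ, ∃ t : ℝ, 0 ≤ t ∧ M < η t)
    (hmod : ∀ ε : ℝ, 0 < ε → ∀ x y : X, ‖x‖ ≤ 1 → ‖y‖ ≤ 1 → ε ≤ ‖x - y‖ →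
      ‖(2 : ℝ)⁻¹ • (x + y)‖ ≤ 1 - η ε)
    (C : Set X) (hCconv : Convex ℝ C)
    (b : ℝ) (hb : 0 < b) (hC : ∀ z ∈ C, ‖z‖ ≤ b / 2)
    (T : X → X) (hTC : Set.MapsTo T C C)
    (hT : ∀ x ∈ C, ∀ y ∈ C, ‖T x - T y‖ ≤ ‖x - y‖)
    (γ₂ : ℝ → ℝ) (hγ₂ : ∀ t : ℝ, γ₂ t = min t (b / 2 * η (4 * t / b))) :
    StrictMonoOn γ₂ (Set.Ici 0) ∧
    (∀ M : ℝ, ∃ t : ℝ, 0 ≤ t ∧ M < γ₂ t) ∧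
    ContinuousOn γ₂ (Set.Ici 0) ∧
    γ₂ 0 = 0 ∧
    (∀ x₁ ∈ C, ∀ x₂ ∈ C, ∀ l : ℝ, 0 ≤ l → l ≤ 1 →
      γ₂ ‖T (l • x₁ + (1 - l) • x₂) - (l • T x₁ + (1 - l) • T x₂)‖
        ≤ ‖x₁ - x₂‖ - ‖T x₁ - T x₂‖) := by
  have hηpos : ∀ x : ℝ, 0 < x → 0 < η x := fun x hx => (hηmono x (x + 1) hx (by linarith)).1
  have hηmono' : ∀ s t : ℝ, 0 ≤ s → s < t → η s < η t := by
    intro s t hs hst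
    rcases hs.eq_or_lt with h | h
    · rw [← h, hη0]; exact hηpos t (h ▸ hst)
    · exact (hηmono s t h hst).2
  refine ⟨?_, ?_, ?_, ?_, ?_⟩
  · -- strict mono
    intro s hs t ht hst
    simp only [Set.mem_Ici] at hs ht
    rw [hγ₂, hγ₂]
    have h4 : 4 * s / b < 4 * t / b := (div_lt_div_iff_of_pos_right hb).mpr (by linarith)
    have h1 : b / 2 * η (4 * s / b) < b / 2 * η (4 * t / b) :=
      mul_lt_mul_of_pos_left (hηmono' _ _ (div_nonneg (by linarith) hb.le) h4) (by positivity)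
    exact lt_min ((min_le_left _ _).trans_lt hst) ((min_le_right _ _).trans_lt h1)
  · -- unbounded
    intro M
    obtain ⟨t0, ht0, hMt0⟩ := hηunb (max (2 * M / b) 0)
    have ht0pos : 0 < t0 := by
      rcases ht0.eq_or_lt with h | h
      · exfalso; rw [← h, hη0] at hMt0; exact absurd hMt0 (not_lt.mpr (le_max_right _ _))
      · exact h
    refine ⟨max (|M| + 1) (b * t0 / 4), le_trans (by positivity) (le_max_left _ _), ?_⟩
    rw [hγ₂, lt_min_iff]
    constructor
    · calc M ≤ |M| := le_abs_self M
        _ < |M| + 1 := by linarith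
        _ ≤ _ := le_max_left _ _
    · have harg : t0 ≤ 4 * max (|M| + 1) (b * t0 / 4) / b := by
        rw [le_div_iff₀ hb]
        calc t0 * b = b * t0 / 4 * 4 := by ring
          _ ≤ max (|M| + 1) (b * t0 / 4) * 4 := by
              apply mul_le_mul_of_nonneg_right (le_max_right _ _) (by norm_num)
          _ = 4 * max (|M| + 1) (b * t0 / 4) := by ring
      have hη : η t0 ≤ η (4 * max (|M| + 1) (b * t0 / 4) / b) := by
        rcases harg.eq_or_lt with h | h
        · exact le_of_eq (congrArg η h)
        · exact le_of_lt (hηmono' t0 _ ht0 h)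
      have h2M : 2 * M / b < η t0 := lt_of_le_of_lt (le_max_left _ _) hMt0
      rw [div_lt_iff₀ hb] at h2M
      nlinarith [mul_le_mul_of_nonneg_left hη (by positivity : (0:ℝ) ≤ b / 2), h2M]
  · -- continuity
    have : ContinuousOn (fun t : ℝ => min t (b / 2 * η (4 * t / b))) (Set.Ici 0) := by
      apply ContinuousOn.inf continuousOn_id
      apply ContinuousOn.mul continuousOn_const
      have hf : ContinuousOn (fun t : ℝ => 4 * t / b) (Set.Ici 0) := by fun_prop
      have hmap : Set.MapsTo (fun t : ℝ => 4 * t / b) (Set.Ici 0) (Set.Ici 0) := by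
        intro t ht
        simp only [Set.mem_Ici] at *
        exact div_nonneg (by linarith) hb.le
      exact hηcont.comp hf hmap
    exact this.congr (fun t _ => hγ₂ t)
  · rw [hγ₂]; simp [hη0]
  · -- main inequality
    intro x₁ hx₁ x₂ hx₂ l hl0 hl1
    rcases le_or_gt l (1/2) with h | h
    · exact key_half η hη0 hηmono hηconv hmod C hCconv b hb hC T hTC hT γ₂ hγ₂ x₁ hx₁ x₂ hx₂ l hl0 h
    · have h' := key_half η hη0 hηmono hηconv hmod C hCconv b hb hC T hTC hT γ₂ hγ₂
        x₂ hx₂ x₁ hx₁ (1 - l) (by linarith) (by linarith)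
      rw [show (1:ℝ) - (1 - l) = l from by ring] at h'
      rw [add_comm ((1-l) • x₂) (l • x₁), add_comm ((1-l) • T x₂) (l • T x₁),
        norm_sub_rev x₂ x₁, norm_sub_rev (T x₂) (T x₁)] at h'
      exact h'
end

section
/- Define recursively γ_{n+1}(t) := min{γ_n(t), γ₂(γ_n(t/2)/3)} for n ≥ 2, where γ₂ : [0,∞) → [0,∞) is strictly increasing, unbounded, continuous with γ₂(0) = 0 and γ₂(r) ≤ r for all r. Then each γ_n is strictly increasing, unbounded, continuous, γ_n(0) = 0, γ_n(r) ≤ r, and the inverses satisfy γ_{n+1}^{-1}(s) ≥ γ₂^{-1}(s) + γ_n^{-1}(s + 2·γ₂^{-1}(s)) for all s ≥ 0. -/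
lemma stmt_12_aux (γ₂ : ℝ → ℝ)
    (hγ₂mono : StrictMonoOn γ₂ (Set.Ici 0))
    (hγ₂unb : ∀ M : ℝ, ∃ t : ℝ, 0 ≤ t ∧ M < γ₂ t)
    (hγ₂cont : ContinuousOn γ₂ (Set.Ici 0))
    (hγ₂0 : γ₂ 0 = 0)
    (hγ₂le : ∀ r : ℝ, 0 ≤ r → γ₂ r ≤ r)
    (γ : ℕ → ℝ → ℝ)
    (hbase : γ 2 = γ₂)
    (hrec : ∀ n : ℕ, 2 ≤ n → ∀ t : ℝ, γ (n + 1) t = min (γ n t) (γ₂ (γ n (t / 2) / 3))) :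
    ∀ n : ℕ, 2 ≤ n →
      StrictMonoOn (γ n) (Set.Ici 0) ∧
      (∀ M : ℝ, ∃ t : ℝ, 0 ≤ t ∧ M < γ n t) ∧
      ContinuousOn (γ n) (Set.Ici 0) ∧
      γ n 0 = 0 ∧
      (∀ r : ℝ, 0 ≤ r → γ n r ≤ r) := by
  intro n hn
  induction n, hn using Nat.le_induction with
  | base => rw [hbase]; exact ⟨hγ₂mono, hγ₂unb, hγ₂cont, hγ₂0, hγ₂le⟩
  | succ n hn ih =>
    obtain ⟨mono, unb, cont, zero, hle⟩ := ih
    have hpos : ∀ t : ℝ, 0 ≤ t → 0 ≤ γ n t := by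
      intro t ht
      have := mono.monotoneOn (Set.mem_Ici.mpr le_rfl) (Set.mem_Ici.mpr ht) ht
      rw [zero] at this; exact this
    constructor
    · -- strict mono
      intro a ha b hb hab
      rw [hrec n hn a, hrec n hn b]
      have ha' : (0:ℝ) ≤ a := ha
      have hb' : (0:ℝ) ≤ b := hb
      have h1 : γ n a < γ n b := mono ha hb hab
      have h2 : γ₂ (γ n (a / 2) / 3) < γ₂ (γ n (b / 2) / 3) := by
        have hin : γ n (a / 2) < γ n (b / 2) :=
          mono (Set.mem_Ici.mpr (by linarith)) (Set.mem_Ici.mpr (by linarith)) (by linarith)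
        exact hγ₂mono (Set.mem_Ici.mpr (div_nonneg (hpos _ (by linarith)) (by norm_num)))
          (Set.mem_Ici.mpr (div_nonneg (hpos _ (by linarith)) (by norm_num)))
          (by linarith)
      exact lt_min (lt_of_le_of_lt (min_le_left _ _) h1)
        (lt_of_le_of_lt (min_le_right _ _) h2)
    refine ⟨?_, ?_, ?_, ?_⟩
    · -- unbounded
      intro M
      obtain ⟨r, hr0, hrM⟩ := hγ₂unb M
      obtain ⟨u, hu0, huu⟩ := unb (3 * r)
      obtain ⟨t₁, ht₁0, ht₁⟩ := unb M
      refine ⟨max t₁ (2 * u), le_trans ht₁0 (le_max_left _ _), ?_⟩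
      rw [hrec n hn]
      set t := max t₁ (2 * u) with ht
      have ht0 : (0:ℝ) ≤ t := le_trans ht₁0 (le_max_left _ _)
      have h1 : M < γ n t := lt_of_lt_of_le ht₁
        (mono.monotoneOn (Set.mem_Ici.mpr ht₁0) (Set.mem_Ici.mpr ht0) (le_max_left _ _))
      have h2 : M < γ₂ (γ n (t / 2) / 3) := by
        have hu2 : u ≤ t / 2 := by
          have : 2 * u ≤ t := le_max_right _ _
          linarith
        have h3 : 3 * r < γ n (t / 2) := lt_of_lt_of_le huu
          (mono.monotoneOn (Set.mem_Ici.mpr hu0) (Set.mem_Ici.mpr (by linarith)) hu2)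
        have h4 : r < γ n (t / 2) / 3 := by linarith
        exact lt_of_lt_of_le hrM
          (le_of_lt (hγ₂mono (Set.mem_Ici.mpr hr0)
            (Set.mem_Ici.mpr (le_trans hr0 h4.le)) h4))
      exact lt_min h1 h2
    · -- continuity
      have hhalf : ContinuousOn (fun t : ℝ => γ n (t / 2)) (Set.Ici 0) := by
        apply cont.comp (by fun_prop)
        intro t ht
        exact Set.mem_Ici.mpr (by simpa using div_nonneg (Set.mem_Ici.mp ht) (by norm_num))
      have hB : ContinuousOn (fun t : ℝ => γ₂ (γ n (t / 2) / 3)) (Set.Ici 0) := by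
        apply hγ₂cont.comp (hhalf.div_const 3)
        intro t ht
        exact Set.mem_Ici.mpr (div_nonneg (hpos _ (div_nonneg (Set.mem_Ici.mp ht) (by norm_num))) (by norm_num))
      have := (cont.inf hB)
      exact this.congr (fun t _ => hrec n hn t)
    · -- zero
      rw [hrec n hn 0]
      norm_num [zero, hγ₂0]
    · -- le
      intro r hr
      rw [hrec n hn r]
      exact le_trans (min_le_left _ _) (hle r hr)

theorem stmt_12 (γ₂ : ℝ → ℝ)
    (hγ₂mono : StrictMonoOn γ₂ (Set.Ici 0))
    (hγ₂unb : ∀ M : ℝ, ∃ t : ℝ, 0 ≤ t ∧ M < γ₂ t)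
    (hγ₂cont : ContinuousOn γ₂ (Set.Ici 0))
    (hγ₂0 : γ₂ 0 = 0)
    (hγ₂le : ∀ r : ℝ, 0 ≤ r → γ₂ r ≤ r)
    (γ : ℕ → ℝ → ℝ)
    (hbase : γ 2 = γ₂)
    (hrec : ∀ n : ℕ, 2 ≤ n → ∀ t : ℝ, γ (n + 1) t = min (γ n t) (γ₂ (γ n (t / 2) / 3)))
    (γinv : ℕ → ℝ → ℝ)
    (hinv : ∀ n : ℕ, 2 ≤ n →
      (∀ t : ℝ, 0 ≤ t → γinv n (γ n t) = t) ∧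
      (∀ s : ℝ, 0 ≤ s → γ n (γinv n s) = s ∧ 0 ≤ γinv n s)) :
    ∀ n : ℕ, 2 ≤ n →
      StrictMonoOn (γ n) (Set.Ici 0) ∧
      (∀ M : ℝ, ∃ t : ℝ, 0 ≤ t ∧ M < γ n t) ∧
      ContinuousOn (γ n) (Set.Ici 0) ∧
      γ n 0 = 0 ∧
      (∀ r : ℝ, 0 ≤ r → γ n r ≤ r) ∧
      (∀ s : ℝ, 0 ≤ s →
        γinv 2 s + γinv n (s + 2 * γinv 2 s) ≤ γinv (n + 1) s) := by
  have aux := stmt_12_aux γ₂ hγ₂mono hγ₂unb hγ₂cont hγ₂0 hγ₂le γ hbase hrec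
  intro n hn
  obtain ⟨mono, unb, cont, zero, hle⟩ := aux n hn
  obtain ⟨mono', _, _, _, _⟩ := aux (n + 1) (by omega)
  refine ⟨mono, unb, cont, zero, hle, ?_⟩
  intro s hs
  obtain ⟨_, hr2⟩ := hinv 2 le_rfl
  obtain ⟨γ2a, ha0⟩ := hr2 s hs
  set a := γinv 2 s with ha
  have γ₂a : γ₂ a = s := by rw [← hbase]; exact γ2a
  have hsa : s ≤ a := γ₂a ▸ hγ₂le a ha0
  have hs2a : (0:ℝ) ≤ s + 2 * a := by linarith
  obtain ⟨_, hrn⟩ := hinv n hn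
  obtain ⟨γnb, hb0⟩ := hrn (s + 2 * a) hs2a
  set b := γinv n (s + 2 * a) with hb
  have hab : a ≤ b := by
    by_contra h
    push_neg at h
    have h1 : γ n b < γ n a := mono (Set.mem_Ici.mpr hb0) (Set.mem_Ici.mpr ha0) h
    have h2 : γ n a ≤ a := hle a ha0
    rw [γnb] at h1
    linarith
  obtain ⟨_, hrn1⟩ := hinv (n + 1) (by omega)
  obtain ⟨γc, hc0⟩ := hrn1 s hs
  set c := γinv (n + 1) s with hc
  by_contra h
  push_neg at h
  have h1 : γ (n + 1) c < γ (n + 1) (a + b) :=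
    mono' (Set.mem_Ici.mpr hc0) (Set.mem_Ici.mpr (by linarith)) h
  rw [γc] at h1
  have hmid : (0:ℝ) ≤ (a + b) / 2 := by linarith
  have h2 : γ n ((a + b) / 2) ≤ s + 2 * a := by
    have := mono.monotoneOn (Set.mem_Ici.mpr hmid) (Set.mem_Ici.mpr hb0) (by linarith)
    rw [γnb] at this; exact this
  have h3 : γ n ((a + b) / 2) / 3 ≤ a := by linarith
  have h4 : γ₂ (γ n ((a + b) / 2) / 3) ≤ s := by
    have := hγ₂mono.monotoneOn
      (Set.mem_Ici.mpr (div_nonneg (by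
        have := mono.monotoneOn (Set.mem_Ici.mpr le_rfl) (Set.mem_Ici.mpr hmid) hmid
        rw [zero] at this; exact this) (by norm_num)))
      (Set.mem_Ici.mpr ha0) h3
    rw [γ₂a] at this; exact this
  have h5 : γ (n + 1) (a + b) ≤ s := by
    rw [hrec n hn]
    exact le_trans (min_le_right _ _) h4
  linarith
end

section
/- Let C be a convex subset of a normed space X, T : C → C nonexpansive, and suppose γ : [0,∞) → [0,∞) satisfies, for every l ∈ ℕ and every convex combination ∑ λ_i x_i of points of C: γ(‖T^l(∑ λ_i x_i) − ∑ λ_i T^l x_i‖) ≤ max_{i,j}(‖x_i − x_j‖ − ‖T^l x_i − T^l x_j‖). Then for x ∈ C, m, n ≥ 1 and l ∈ ℕ, with α^p_k := ‖T^k x − T^{k+p} x‖ and β^l_{m,n} := ‖(S_m T^{l+m} x + S_n T^{l+n} x)/2 − T^l((S_m T^m x + S_n T^n x)/2)‖ (where S_k z = (1/k)∑_{i=0}^{k-1} T^i z), one has γ(β^l_{m,n}) ≤ max{α^p_k − α^p_{l+k} : min{m,n} ≤ k < 2·max{m,n}, p < 2·max{m,n}}. -/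
theorem stmt_14 {X : Type*} [NormedAddCommGroup X] [NormedSpace ℝ X]
    (C : Set X) (hCconv : Convex ℝ C)
    (T : X → X) (hTC : Set.MapsTo T C C)
    (hT : ∀ x ∈ C, ∀ y ∈ C, ‖T x - T y‖ ≤ ‖x - y‖)
    (x : X) (hx : x ∈ C)
    (γ : ℝ → ℝ)
    (hγ : ∀ (l : ℕ) (N : ℕ), 0 < N → ∀ (xs : Fin N → X) (lam : Fin N → ℝ),
      (∀ i, xs i ∈ C) → (∀ i, 0 ≤ lam i) → (∑ i, lam i = 1) →
      ∃ i j : Fin N,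
        γ ‖T^[l] (∑ i, lam i • xs i) - ∑ i, lam i • T^[l] (xs i)‖
          ≤ ‖xs i - xs j‖ - ‖T^[l] (xs i) - T^[l] (xs j)‖)
    (S : ℕ → X → X)
    (hS : ∀ (k : ℕ) (z : X), S k z = (k : ℝ)⁻¹ • ∑ i ∈ Finset.range k, T^[i] z)
    (α : ℕ → ℕ → ℝ)
    (hα : ∀ p k : ℕ, α p k = ‖T^[k] x - T^[k + p] x‖)
    (β : ℕ → ℕ → ℕ → ℝ)
    (hβ : ∀ l m n : ℕ, β l m n =
      ‖(2 : ℝ)⁻¹ • (S m (T^[l + m] x) + S n (T^[l + n] x))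
        - T^[l] ((2 : ℝ)⁻¹ • (S m (T^[m] x) + S n (T^[n] x)))‖)
    (m n : ℕ) (hm : 1 ≤ m) (hn : 1 ≤ n) (l : ℕ) :
    ∃ k p : ℕ, min m n ≤ k ∧ k < 2 * max m n ∧ p < 2 * max m n ∧
      γ (β l m n) ≤ α p k - α p (l + k) := by
  have hm0 : (m : ℝ) ≠ 0 := by positivity
  have hn0 : (n : ℝ) ≠ 0 := by positivity
  set κ : Fin (m + n) → ℕ :=
    Fin.append (fun i : Fin m => m + (i : ℕ)) (fun i : Fin n => n + (i : ℕ)) with hκ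
  set lam : Fin (m + n) → ℝ :=
    Fin.append (fun _ : Fin m => (2 * (m : ℝ))⁻¹) (fun _ : Fin n => (2 * (n : ℝ))⁻¹) with hlam
  set xs : Fin (m + n) → X := fun i => T^[κ i] x with hxs
  have hxC : ∀ k : ℕ, T^[k] x ∈ C := fun k => Set.MapsTo.iterate hTC k hx
  -- key sum identity
  have key : ∀ a : ℕ, ∑ i, lam i • T^[a + κ i] x
      = (2 : ℝ)⁻¹ • (S m (T^[a + m] x) + S n (T^[a + n] x)) := by
    intro a
    rw [Fin.sum_univ_add]
    simp only [hκ, hlam, Fin.append_left, Fin.append_right]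
    rw [hS, hS, smul_add, smul_smul, smul_smul, Finset.smul_sum, Finset.smul_sum,
      ← Fin.sum_univ_eq_sum_range (fun i => ((2:ℝ)⁻¹ * (m : ℝ)⁻¹) • T^[i] (T^[a + m] x)) m,
      ← Fin.sum_univ_eq_sum_range (fun i => ((2:ℝ)⁻¹ * (n : ℝ)⁻¹) • T^[i] (T^[a + n] x)) n]
    congr 1
    · refine Finset.sum_congr rfl fun i _ => ?_
      rw [← Function.iterate_add_apply, mul_inv]
      congr 2
      omega
    · refine Finset.sum_congr rfl fun i _ => ?_
      rw [← Function.iterate_add_apply, mul_inv]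
      congr 2
      omega
  have hlam_nonneg : ∀ i, 0 ≤ lam i := by
    intro i
    refine Fin.addCases (fun j => ?_) (fun j => ?_) i <;>
      simp only [hlam, Fin.append_left, Fin.append_right] <;> positivity
  have hlam_sum : ∑ i, lam i = 1 := by
    rw [hlam, Fin.sum_univ_add]
    simp only [Fin.append_left, Fin.append_right, Finset.sum_const, Finset.card_univ,
      Fintype.card_fin, nsmul_eq_mul]
    field_simp
    ring
  obtain ⟨i, j, hij⟩ := hγ l (m + n) (by omega) xs lam (fun i => hxC _) hlam_nonneg hlam_sum
  -- rewrite the argument of γ to β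
  have harg : ‖T^[l] (∑ i, lam i • xs i) - ∑ i, lam i • T^[l] (xs i)‖ = β l m n := by
    have e1 : ∑ i, lam i • xs i = (2 : ℝ)⁻¹ • (S m (T^[m] x) + S n (T^[n] x)) := by
      have := key 0
      simpa [hxs] using this
    have e2 : ∑ i, lam i • T^[l] (xs i)
        = (2 : ℝ)⁻¹ • (S m (T^[l + m] x) + S n (T^[l + n] x)) := by
      have := key l
      simp only [hxs]
      rw [← this]
      exact Finset.sum_congr rfl fun i _ => by rw [Function.iterate_add_apply]
    rw [e1, e2, hβ, norm_sub_rev]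
  rw [harg] at hij
  have hxsi : ∀ i, xs i = T^[κ i] x := fun i => rfl
  have hTl : ∀ i, T^[l] (xs i) = T^[l + κ i] x := by
    intro i; rw [hxs]; exact (Function.iterate_add_apply T l (κ i) x).symm
  have hκbound : ∀ i, min m n ≤ κ i ∧ κ i < 2 * max m n := by
    intro i
    refine Fin.addCases (fun j => ?_) (fun j => ?_) i <;>
      simp only [hκ, Fin.append_left, Fin.append_right] <;>
      [ (have := j.is_lt; omega) ; (have := j.is_lt; omega) ]
  rcases le_total (κ i) (κ j) with hle | hle
  · refine ⟨κ i, κ j - κ i, (hκbound i).1, (hκbound i).2, ?_, ?_⟩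
    · have := (hκbound j).2; omega
    · rw [hα, hα]
      have e : κ i + (κ j - κ i) = κ j := by omega
      have e' : l + κ i + (κ j - κ i) = l + κ j := by omega
      rw [e, e']
      calc γ (β l m n) ≤ ‖xs i - xs j‖ - ‖T^[l] (xs i) - T^[l] (xs j)‖ := hij
        _ = ‖T^[κ i] x - T^[κ j] x‖ - ‖T^[l + κ i] x - T^[l + κ j] x‖ := by
            rw [hxsi, hxsi, hTl, hTl]
  · refine ⟨κ j, κ i - κ j, (hκbound j).1, (hκbound j).2, ?_, ?_⟩
    · have := (hκbound i).2; omega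
    · rw [hα, hα]
      have e : κ j + (κ i - κ j) = κ i := by omega
      have e' : l + κ j + (κ i - κ j) = l + κ i := by omega
      rw [e, e']
      calc γ (β l m n) ≤ ‖xs i - xs j‖ - ‖T^[l] (xs i) - T^[l] (xs j)‖ := hij
        _ = ‖T^[κ j] x - T^[κ i] x‖ - ‖T^[l + κ j] x - T^[l + κ i] x‖ := by
            rw [hxsi, hxsi, hTl, hTl, norm_sub_rev, norm_sub_rev (T^[l + κ i] x)]
end

section
/- Let C be a subset of a normed space, T : C → C nonexpansive, x ∈ C, and assume there is a map Γ such that for every ε > 0 and every g : ℕ → ℕ there exist i ≤ Γ(ε, g) and j > i with ‖T^{g(j)} x − T^{g(i)} x‖ < ε. Then for every ε > 0 and g : ℕ → ℕ there is N ≤ g̃^K(0), where g̃(n) = n + g(n) and K = Γ(ε/2, l ↦ g̃^l(0)), such that |α^i_m − α^i_n| < ε for all m, n ∈ [N, N + g(N)] and all i ∈ ℕ, where α^i_n := ‖T^n x − T^{n+i} x‖. -/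
theorem stmt_17 {X : Type*} [NormedAddCommGroup X]
    (C : Set X) (T : X → X) (hTC : Set.MapsTo T C C)
    (hT : ∀ x ∈ C, ∀ y ∈ C, ‖T x - T y‖ ≤ ‖x - y‖)
    (x : X) (hx : x ∈ C)
    (Γ : ℝ → (ℕ → ℕ) → ℕ)
    (hΓ : ∀ ε : ℝ, 0 < ε → ∀ g : ℕ → ℕ,
      ∃ i ≤ Γ ε g, ∃ j, i < j ∧ ‖T^[g j] x - T^[g i] x‖ < ε)
    (ε : ℝ) (hε : 0 < ε) (g : ℕ → ℕ) :
    ∃ N ≤ (fun n => n + g n)^[Γ (ε / 2) (fun l => (fun n => n + g n)^[l] 0)] 0,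
      ∀ m n : ℕ, N ≤ m → m ≤ N + g N → N ≤ n → n ≤ N + g N → ∀ i : ℕ,
        |‖T^[m] x - T^[m + i] x‖ - ‖T^[n] x - T^[n + i] x‖| < ε := by
  set gt : ℕ → ℕ := fun n => n + g n with hgt
  have horb : ∀ n, T^[n] x ∈ C := by
    intro n; induction n with
    | zero => simpa
    | succ n ih => rw [Function.iterate_succ_apply']; exact hTC ih
  have hk : ∀ k (u v : X), u ∈ C → v ∈ C → ‖T^[k] u - T^[k] v‖ ≤ ‖u - v‖ := by
    intro k; induction k with
    | zero => intro u v _ _; simp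
    | succ k ih =>
      intro u v hu hv
      rw [Function.iterate_succ_apply, Function.iterate_succ_apply]
      exact (ih _ _ (hTC hu) (hTC hv)).trans (hT u hu v hv)
  -- α is nonincreasing in first argument
  have hdec : ∀ a b i : ℕ, a ≤ b →
      ‖T^[b] x - T^[b + i] x‖ ≤ ‖T^[a] x - T^[a + i] x‖ := by
    intro a b i hab
    obtain ⟨d, rfl⟩ := Nat.exists_eq_add_of_le hab
    have h1 : T^[a + d] x = T^[d] (T^[a] x) := by
      rw [Nat.add_comm, Function.iterate_add_apply]
    have h2 : T^[a + d + i] x = T^[d] (T^[a + i] x) := by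
      rw [show a + d + i = d + (a + i) by ring, Function.iterate_add_apply]
    rw [h1, h2]
    exact hk d _ _ (horb a) (horb (a + i))
  have hmono : ∀ l l' : ℕ, l ≤ l' → gt^[l] 0 ≤ gt^[l'] 0 := by
    intro l l' hll
    induction l', hll using Nat.le_induction with
    | base => exact le_rfl
    | succ l' _ ih =>
      refine ih.trans ?_
      rw [Function.iterate_succ_apply']
      exact Nat.le_add_right _ _
  obtain ⟨i, hiK, j, hij, hlt⟩ := hΓ (ε / 2) (by linarith) (fun l => gt^[l] 0)
  set N := gt^[i] 0 with hN
  set M := gt^[j] 0 with hM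
  refine ⟨N, hmono i _ hiK, ?_⟩
  have hNM : N + g N ≤ M := by
    have : gt^[i + 1] 0 ≤ M := hmono _ _ hij
    rwa [Function.iterate_succ_apply'] at this
  have hNleM : N ≤ M := le_trans (Nat.le_add_right _ _) hNM
  -- key estimate: α N k < α M k + ε
  have hmain : ∀ k : ℕ, ‖T^[N] x - T^[N + k] x‖ < ‖T^[M] x - T^[M + k] x‖ + ε := by
    intro k
    have h3 : ‖T^[M + k] x - T^[N + k] x‖ ≤ ‖T^[M] x - T^[N] x‖ := by
      have h1 : T^[M + k] x = T^[k] (T^[M] x) := by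
        rw [Nat.add_comm, Function.iterate_add_apply]
      have h2 : T^[N + k] x = T^[k] (T^[N] x) := by
        rw [Nat.add_comm, Function.iterate_add_apply]
      rw [h1, h2]
      exact hk k _ _ (horb M) (horb N)
    have htri : ‖T^[N] x - T^[N + k] x‖ ≤
        ‖T^[N] x - T^[M] x‖ + ‖T^[M] x - T^[M + k] x‖ + ‖T^[M + k] x - T^[N + k] x‖ := by
      calc ‖T^[N] x - T^[N + k] x‖
          ≤ ‖T^[N] x - T^[M + k] x‖ + ‖T^[M + k] x - T^[N + k] x‖ := norm_sub_le_norm_sub_add_norm_sub _ _ _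
        _ ≤ ‖T^[N] x - T^[M] x‖ + ‖T^[M] x - T^[M + k] x‖ + ‖T^[M + k] x - T^[N + k] x‖ := by
            have := norm_sub_le_norm_sub_add_norm_sub (T^[N] x) (T^[M] x) (T^[M + k] x)
            linarith
    have heq : ‖T^[N] x - T^[M] x‖ = ‖T^[M] x - T^[N] x‖ := norm_sub_rev _ _
    linarith [hlt]
  intro m n hNm hm hNn hn k
  have hm1 : ‖T^[m] x - T^[m + k] x‖ ≤ ‖T^[N] x - T^[N + k] x‖ := hdec N m k hNm
  have hm2 : ‖T^[M] x - T^[M + k] x‖ ≤ ‖T^[m] x - T^[m + k] x‖ :=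
    hdec m M k (hm.trans hNM)
  have hn1 : ‖T^[n] x - T^[n + k] x‖ ≤ ‖T^[N] x - T^[N + k] x‖ := hdec N n k hNn
  have hn2 : ‖T^[M] x - T^[M + k] x‖ ≤ ‖T^[n] x - T^[n + k] x‖ :=
    hdec n M k (hn.trans hNM)
  have := hmain k
  rw [abs_sub_lt_iff]
  constructor <;> linarith
end
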